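/- arXiv:2207.10319 — 4 statements merged into one kernel-verified Lean document; each statement's English description precedes it below -/
import Mathlib

section
/- Let (μ_{n,k})_{n ≥ 0, 0 ≤ k < 2^n} be nonnegative reals with ∑_{n,k} μ_{n,k}^γ < ∞ for some γ > 1, and let q > 1 be such that p = q/(q-1) satisfies 1 < p < γ/(γ-1). Define B_{n,k} = ∑_{m ≥ n} 2^{-(m-n)} ∑_{j : ⌊j/2^{m-n}⌋ = k} μ_{m,j}. Then ∑_{n ≥ 0} ∑_{k=0}^{2^n - 1} B_{n,k}^γ ≤ C · ∑_{n,k} μ_{n,k}^γ for some constant C depending only on γ. -/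
open ENNReal

/-- Finite Jensen: `(∑ f)^γ ≤ card^(γ-1) * ∑ f^γ` in `ℝ≥0∞`. -/
lemma aux_finset_rpow_sum_le {γ : ℝ} (hγ : 1 ≤ γ) (s : Finset ℕ) (f : ℕ → ℝ≥0∞) :
    (∑ j ∈ s, f j) ^ γ ≤ (s.card : ℝ≥0∞) ^ (γ - 1) * ∑ j ∈ s, f j ^ γ := by
  rcases s.eq_empty_or_nonempty with rfl | hs
  · simp [ENNReal.zero_rpow_of_pos (lt_of_lt_of_le one_pos hγ)]
  · have hc0 : (s.card : ℝ≥0∞) ≠ 0 := by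
      simpa using hs.card_pos.ne'
    have hct : (s.card : ℝ≥0∞) ≠ ⊤ := natCast_ne_top _
    have hγ0 : (0 : ℝ) ≤ γ := le_trans zero_le_one hγ
    have hw : ∑ _j ∈ s, (s.card : ℝ≥0∞)⁻¹ = 1 := by
      rw [Finset.sum_const, nsmul_eq_mul, ENNReal.mul_inv_cancel hc0 hct]
    have h := ENNReal.rpow_arith_mean_le_arith_mean_rpow s (fun _ => (s.card : ℝ≥0∞)⁻¹) f hw hγ
    rw [← Finset.mul_sum, ← Finset.mul_sum, ENNReal.mul_rpow_of_nonneg _ _ hγ0] at h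
    calc (∑ j ∈ s, f j) ^ γ
        = (s.card : ℝ≥0∞) ^ γ * (((s.card : ℝ≥0∞))⁻¹ ^ γ * (∑ j ∈ s, f j) ^ γ) := by
          rw [← mul_assoc, ← ENNReal.mul_rpow_of_nonneg _ _ hγ0,
            ENNReal.mul_inv_cancel hc0 hct, ENNReal.one_rpow, one_mul]
      _ ≤ (s.card : ℝ≥0∞) ^ γ * ((s.card : ℝ≥0∞)⁻¹ * ∑ j ∈ s, f j ^ γ) :=
          mul_le_mul_right h _
      _ = (s.card : ℝ≥0∞) ^ (γ - 1) * ∑ j ∈ s, f j ^ γ := by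
          rw [← mul_assoc, ← ENNReal.rpow_neg_one, ← ENNReal.rpow_add _ _ hc0 hct,
            ← sub_eq_add_neg]

/-- Partition of `ℕ` into dyadic blocks of length `2^d`. -/
lemma aux_tsum_partition (d : ℕ) (f : ℕ → ℝ≥0∞) :
    ∑' j : ℕ, f j = ∑' k : ℕ, ∑ j ∈ Finset.Ico (k * 2 ^ d) ((k + 1) * 2 ^ d), f j := by
  haveI : NeZero (2 ^ d) := ⟨(Nat.two_pow_pos d).ne'⟩
  rw [← (Nat.divModEquiv (2 ^ d)).symm.tsum_eq f, ENNReal.tsum_prod']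
  congr 1
  funext k
  rw [tsum_fintype]
  have h1 : ∀ b : Fin (2 ^ d),
      f ((Nat.divModEquiv (2 ^ d)).symm (k, b)) = f (k * 2 ^ d + (b : ℕ)) := by
    intro b; rfl
  rw [Finset.sum_congr rfl (fun b _ => h1 b)]
  rw [Finset.sum_Ico_eq_sum_range]
  have h2 : (k + 1) * 2 ^ d - k * 2 ^ d = 2 ^ d := by
    rw [add_one_mul, Nat.add_sub_cancel_left]
  rw [h2, ← Fin.sum_univ_eq_sum_range (fun i => f (k * 2 ^ d + i))]

/-- Summability of the Carleson-window sums: if `∑_{n,k} μ_{n,k}^γ < ∞` for some `γ > 1`,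
and `p = q/(q-1)` satisfies `1 < p < γ/(γ-1)`, then with
`B_{n,k} = ∑_{m ≥ n} 2^{-(m-n)} ∑_{j : ⌊j/2^{m-n}⌋ = k} μ_{m,j}` one has
`∑_{n,k} B_{n,k}^γ ≤ C ∑_{n,k} μ_{n,k}^γ` for some constant `C` depending only on `γ`. -/
theorem sum_Bnk_pow_le (γ : ℝ) (hγ : 1 < γ) :
    ∃ C : ℝ, 0 < C ∧
      ∀ (q p : ℝ), 1 < q → p = q / (q - 1) → 1 < p → p < γ / (γ - 1) →
      ∀ (μ : ℕ → ℕ → ℝ), (∀ n k, 0 ≤ μ n k) → (∀ n k, 2 ^ n ≤ k → μ n k = 0) →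
      Summable (fun x : ℕ × ℕ => μ x.1 x.2 ^ γ) →
      (Summable (fun x : ℕ × ℕ =>
          (∑' d : ℕ, (2 : ℝ) ^ (-(d : ℝ)) *
            ∑ j ∈ Finset.Ico (x.2 * 2 ^ d) ((x.2 + 1) * 2 ^ d), μ (x.1 + d) j) ^ γ) ∧
        (∑' x : ℕ × ℕ,
            (∑' d : ℕ, (2 : ℝ) ^ (-(d : ℝ)) *
              ∑ j ∈ Finset.Ico (x.2 * 2 ^ d) ((x.2 + 1) * 2 ^ d), μ (x.1 + d) j) ^ γ)
          ≤ C * ∑' x : ℕ × ℕ, μ x.1 x.2 ^ γ) := by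
  have hγ0 : (0 : ℝ) < γ := lt_trans one_pos hγ
  have hγ0' : (0 : ℝ) ≤ γ := hγ0.le
  have h2ne0 : (2 : ℝ≥0∞) ≠ 0 := two_ne_zero
  have h2net : (2 : ℝ≥0∞) ≠ ⊤ := ENNReal.ofNat_ne_top
  set ε : ℝ := (2 * γ)⁻¹ with hε
  have hεpos : 0 < ε := by positivity
  set r₀ : ℝ≥0∞ := 2 ^ (-ε) with hr₀
  set r₁ : ℝ≥0∞ := 2 ^ (-(1 / 2) : ℝ) with hr₁
  have hr₀lt1 : r₀ < 1 :=
    ENNReal.rpow_lt_one_of_one_lt_of_neg one_lt_two (neg_lt_zero.2 hεpos)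
  have hr₁lt1 : r₁ < 1 :=
    ENNReal.rpow_lt_one_of_one_lt_of_neg one_lt_two (by norm_num)
  set K₀ : ℝ≥0∞ := (1 - r₀)⁻¹ with hK₀
  set K₁ : ℝ≥0∞ := (1 - r₁)⁻¹ with hK₁
  have hKne : ∀ r : ℝ≥0∞, r < 1 → ((1 - r)⁻¹ ≠ 0 ∧ (1 - r)⁻¹ ≠ ⊤) := by
    intro r hr
    constructor
    · rw [ENNReal.inv_ne_zero]
      exact ne_top_of_le_ne_top ENNReal.one_ne_top tsub_le_self
    · rw [ENNReal.inv_ne_top]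
      intro h0
      rw [tsub_eq_zero_iff_le] at h0
      exact absurd hr (not_lt.2 h0)
  obtain ⟨hK₀0, hK₀t⟩ := hKne r₀ hr₀lt1
  obtain ⟨hK₁0, hK₁t⟩ := hKne r₁ hr₁lt1
  set Cen : ℝ≥0∞ := K₀ ^ γ * K₁ with hCen
  have hCen0 : Cen ≠ 0 := by
    apply mul_ne_zero _ hK₁0
    simp [ENNReal.rpow_eq_zero_iff, hK₀0, hK₀t, hγ0, hγ0.not_gt]
    exact hK₀0
  have hCent : Cen ≠ ⊤ :=
    ENNReal.mul_ne_top (ENNReal.rpow_ne_top_of_nonneg hγ0' hK₀t) hK₁t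
  refine ⟨Cen.toReal, ENNReal.toReal_pos hCen0 hCent, ?_⟩
  intro q p _ _ _ _ μ hμ0 _ hsum
  -- ENNReal versions
  set ν : ℕ → ℕ → ℝ≥0∞ := fun n k => ENNReal.ofReal (μ n k) with hν
  set g : ℕ × ℕ → ℕ → ℝ≥0∞ := fun x d =>
    2 ^ (-(d : ℝ)) * ∑ j ∈ Finset.Ico (x.2 * 2 ^ d) ((x.2 + 1) * 2 ^ d), ν (x.1 + d) j with hg
  set A : ℕ × ℕ → ℝ≥0∞ := fun x => ∑' d : ℕ, g x d with hA
  set W : ℕ × ℕ → ℕ → ℝ≥0∞ := fun x d =>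
    ∑ j ∈ Finset.Ico (x.2 * 2 ^ d) ((x.2 + 1) * 2 ^ d), ν (x.1 + d) j ^ γ with hW
  set Mtot : ℝ≥0∞ := ∑' x : ℕ × ℕ, ν x.1 x.2 ^ γ with hMtot
  have hνrpow : ∀ n k, ν n k ^ γ = ENNReal.ofReal (μ n k ^ γ) := fun n k =>
    ENNReal.ofReal_rpow_of_nonneg (hμ0 n k) hγ0'
  have hMeq : Mtot = ENNReal.ofReal (∑' x : ℕ × ℕ, μ x.1 x.2 ^ γ) := by
    rw [ENNReal.ofReal_tsum_of_nonneg (fun x => Real.rpow_nonneg (hμ0 _ _) _) hsum]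
    exact tsum_congr fun x => hνrpow x.1 x.2
  have hMne : Mtot ≠ ⊤ := by rw [hMeq]; exact ENNReal.ofReal_ne_top
  -- pointwise bound: g x d ^ γ ≤ 2^(-d) * W x d
  have hcard : ∀ (k d : ℕ),
      ((Finset.Ico (k * 2 ^ d) ((k + 1) * 2 ^ d)).card : ℝ≥0∞) = 2 ^ ((d : ℝ)) := by
    intro k d
    rw [Nat.card_Ico, add_one_mul, Nat.add_sub_cancel_left]
    push_cast
    rw [← ENNReal.rpow_natCast 2 d]
  have hgW : ∀ x d, g x d ^ γ ≤ 2 ^ (-(d : ℝ)) * W x d := by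
    intro x d
    have h1 : g x d ^ γ = 2 ^ (-(d : ℝ) * γ) *
        (∑ j ∈ Finset.Ico (x.2 * 2 ^ d) ((x.2 + 1) * 2 ^ d), ν (x.1 + d) j) ^ γ := by
      rw [hg, ENNReal.mul_rpow_of_nonneg _ _ hγ0', ← ENNReal.rpow_mul]
    have h2 := aux_finset_rpow_sum_le hγ.le (Finset.Ico (x.2 * 2 ^ d) ((x.2 + 1) * 2 ^ d))
      (fun j => ν (x.1 + d) j)
    rw [hcard x.2 d, ← ENNReal.rpow_mul] at h2
    calc g x d ^ γ ≤ 2 ^ (-(d : ℝ) * γ) * (2 ^ ((d : ℝ) * (γ - 1)) * W x d) := by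
          rw [h1]; exact mul_le_mul_right h2 _
      _ = 2 ^ (-(d : ℝ)) * W x d := by
          rw [← mul_assoc, ← ENNReal.rpow_add _ _ h2ne0 h2net]
          ring_nf
  -- the weighted tail sum
  set T : ℕ × ℕ → ℝ≥0∞ := fun x => ∑' d : ℕ, 2 ^ ((d : ℝ) / 2) * g x d ^ γ with hT
  -- Step 1: A x ≤ K₀ * (T x) ^ γ⁻¹
  have hstep1 : ∀ x, A x ≤ K₀ * T x ^ γ⁻¹ := by
    intro x
    have hterm : ∀ d : ℕ, g x d ≤ r₀ ^ d * T x ^ γ⁻¹ := by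
      intro d
      have h1 : 2 ^ ((d : ℝ) / 2) * g x d ^ γ ≤ T x := ENNReal.le_tsum d
      have h2 : g x d ^ γ ≤ 2 ^ (-(d : ℝ) / 2) * T x := by
        calc g x d ^ γ = 2 ^ (-(d : ℝ) / 2) * (2 ^ ((d : ℝ) / 2) * g x d ^ γ) := by
              rw [← mul_assoc, ← ENNReal.rpow_add _ _ h2ne0 h2net, neg_div,
                neg_add_cancel, ENNReal.rpow_zero, one_mul]
          _ ≤ 2 ^ (-(d : ℝ) / 2) * T x := mul_le_mul_right h1 _
      have h3 : g x d = (g x d ^ γ) ^ γ⁻¹ := by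
        rw [← ENNReal.rpow_mul, mul_inv_cancel₀ hγ0.ne', ENNReal.rpow_one]
      rw [h3]
      calc (g x d ^ γ) ^ γ⁻¹ ≤ (2 ^ (-(d : ℝ) / 2) * T x) ^ γ⁻¹ :=
            ENNReal.rpow_le_rpow h2 (inv_nonneg.2 hγ0')
        _ = r₀ ^ d * T x ^ γ⁻¹ := by
            rw [ENNReal.mul_rpow_of_nonneg _ _ (inv_nonneg.2 hγ0'), ← ENNReal.rpow_mul]
            congr 1
            rw [hr₀, ← ENNReal.rpow_natCast (2 ^ (-ε)) d, ← ENNReal.rpow_mul]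
            congr 1
            rw [hε]
            field_simp
    calc A x ≤ ∑' d : ℕ, r₀ ^ d * T x ^ γ⁻¹ :=
          ENNReal.tsum_le_tsum hterm
      _ = (∑' d : ℕ, r₀ ^ d) * T x ^ γ⁻¹ := ENNReal.tsum_mul_right
      _ = K₀ * T x ^ γ⁻¹ := by rw [ENNReal.tsum_geometric]
  -- Step 2: A x ^ γ ≤ K₀ ^ γ * T x
  have hstep2 : ∀ x, A x ^ γ ≤ K₀ ^ γ * T x := by
    intro x
    calc A x ^ γ ≤ (K₀ * T x ^ γ⁻¹) ^ γ := ENNReal.rpow_le_rpow (hstep1 x) hγ0'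
      _ = K₀ ^ γ * T x := by
          rw [ENNReal.mul_rpow_of_nonneg _ _ hγ0', ← ENNReal.rpow_mul,
            inv_mul_cancel₀ hγ0.ne', ENNReal.rpow_one]
  -- Step 3: T x ≤ ∑' d, r₁ ^ d * W x d
  have hstep3 : ∀ x, T x ≤ ∑' d : ℕ, r₁ ^ d * W x d := by
    intro x
    apply ENNReal.tsum_le_tsum
    intro d
    calc 2 ^ ((d : ℝ) / 2) * g x d ^ γ
        ≤ 2 ^ ((d : ℝ) / 2) * (2 ^ (-(d : ℝ)) * W x d) := mul_le_mul_right (hgW x d) _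
      _ = r₁ ^ d * W x d := by
          rw [← mul_assoc, ← ENNReal.rpow_add _ _ h2ne0 h2net, hr₁,
            ← ENNReal.rpow_natCast (2 ^ (-(1 / 2) : ℝ)) d, ← ENNReal.rpow_mul]
          congr 1
          ring
  -- Step 4: sum over x of the right-hand sides
  have hstep4 : (∑' x : ℕ × ℕ, ∑' d : ℕ, r₁ ^ d * W x d) ≤ K₁ * Mtot := by
    have hrow : ∀ n d : ℕ, (∑' k : ℕ, W (n, k) d) = ∑' j : ℕ, ν (n + d) j ^ γ :=
      fun n d => (aux_tsum_partition d (fun j => ν (n + d) j ^ γ)).symm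
    calc (∑' x : ℕ × ℕ, ∑' d : ℕ, r₁ ^ d * W x d)
        = ∑' n : ℕ, ∑' k : ℕ, ∑' d : ℕ, r₁ ^ d * W (n, k) d := ENNReal.tsum_prod'
      _ = ∑' n : ℕ, ∑' d : ℕ, ∑' k : ℕ, r₁ ^ d * W (n, k) d :=
          tsum_congr fun n => ENNReal.tsum_comm
      _ = ∑' n : ℕ, ∑' d : ℕ, r₁ ^ d * ∑' j : ℕ, ν (n + d) j ^ γ := by
          refine tsum_congr fun n => tsum_congr fun d => ?_
          rw [ENNReal.tsum_mul_left, hrow n d]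
      _ = ∑' d : ℕ, ∑' n : ℕ, r₁ ^ d * ∑' j : ℕ, ν (n + d) j ^ γ := ENNReal.tsum_comm
      _ ≤ ∑' d : ℕ, r₁ ^ d * Mtot := by
          refine ENNReal.tsum_le_tsum fun d => ?_
          rw [ENNReal.tsum_mul_left]
          apply mul_le_mul_right
          calc (∑' n : ℕ, ∑' j : ℕ, ν (n + d) j ^ γ)
              ≤ ∑' m : ℕ, ∑' j : ℕ, ν m j ^ γ := by
                have := ENNReal.tsum_comp_le_tsum_of_injective
                  (add_left_injective d) (fun m => ∑' j : ℕ, ν m j ^ γ)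
                simpa using this
            _ = Mtot := (ENNReal.tsum_prod (f := fun m j => ν m j ^ γ)).symm
      _ = (∑' d : ℕ, r₁ ^ d) * Mtot := ENNReal.tsum_mul_right
      _ = K₁ * Mtot := by rw [ENNReal.tsum_geometric]
  -- main ENNReal bound
  have hmain : (∑' x : ℕ × ℕ, A x ^ γ) ≤ Cen * Mtot := by
    calc (∑' x : ℕ × ℕ, A x ^ γ)
        ≤ ∑' x : ℕ × ℕ, K₀ ^ γ * ∑' d : ℕ, r₁ ^ d * W x d :=
          ENNReal.tsum_le_tsum fun x => le_trans (hstep2 x) (mul_le_mul_right (hstep3 x) _)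
      _ = K₀ ^ γ * ∑' x : ℕ × ℕ, ∑' d : ℕ, r₁ ^ d * W x d := ENNReal.tsum_mul_left
      _ ≤ K₀ ^ γ * (K₁ * Mtot) := mul_le_mul_right hstep4 _
      _ = Cen * Mtot := by rw [hCen, mul_assoc]
  have hfin : (∑' x : ℕ × ℕ, A x ^ γ) ≠ ⊤ :=
    ne_top_of_le_ne_top (ENNReal.mul_ne_top hCent hMne) hmain
  -- real/ENNReal conversion
  have hgne : ∀ x d, g x d ≠ ⊤ := by
    intro x d
    apply ENNReal.mul_ne_top
    · simp [ENNReal.rpow_eq_top_iff]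
    · exact (ENNReal.sum_lt_top.2 fun j _ => ENNReal.ofReal_lt_top).ne
  have htermeq : ∀ (x : ℕ × ℕ) (d : ℕ),
      (2 : ℝ) ^ (-(d : ℝ)) * ∑ j ∈ Finset.Ico (x.2 * 2 ^ d) ((x.2 + 1) * 2 ^ d), μ (x.1 + d) j
        = (g x d).toReal := by
    intro x d
    rw [hg, ENNReal.toReal_mul, ENNReal.toReal_sum (fun j _ => ENNReal.ofReal_ne_top)]
    congr 1
    · rw [← ENNReal.toReal_rpow]
      norm_num
    · exact (Finset.sum_congr rfl fun j _ => ENNReal.toReal_ofReal (hμ0 _ _)).symm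
  have hBeq : ∀ x : ℕ × ℕ,
      (∑' d : ℕ, (2 : ℝ) ^ (-(d : ℝ)) *
        ∑ j ∈ Finset.Ico (x.2 * 2 ^ d) ((x.2 + 1) * 2 ^ d), μ (x.1 + d) j) ^ γ
        = (A x ^ γ).toReal := by
    intro x
    rw [← ENNReal.toReal_rpow]
    congr 1
    rw [hA, ENNReal.tsum_toReal_eq (hgne x)]
    exact tsum_congr fun d => htermeq x d
  constructor
  · exact (ENNReal.summable_toReal hfin).congr fun x => (hBeq x).symm
  · calc (∑' x : ℕ × ℕ,
        (∑' d : ℕ, (2 : ℝ) ^ (-(d : ℝ)) *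
          ∑ j ∈ Finset.Ico (x.2 * 2 ^ d) ((x.2 + 1) * 2 ^ d), μ (x.1 + d) j) ^ γ)
        = (∑' x : ℕ × ℕ, A x ^ γ).toReal := by
          rw [ENNReal.tsum_toReal_eq (fun x => ENNReal.ne_top_of_tsum_ne_top hfin x)]
          exact tsum_congr hBeq
      _ ≤ (Cen * Mtot).toReal :=
          ENNReal.toReal_mono (ENNReal.mul_ne_top hCent hMne) hmain
      _ = Cen.toReal * ∑' x : ℕ × ℕ, μ x.1 x.2 ^ γ := by
          rw [ENNReal.toReal_mul, hMeq, ENNReal.toReal_ofReal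
            (tsum_nonneg fun x => Real.rpow_nonneg (hμ0 _ _) _)]
end

section
/- Let Y = ∑_{m ≥ n} 2^{n-m} X_m where (X_m)_{m ≥ n} are independent Poisson random variables with parameters λ_m ≥ 0 satisfying B := ∑_{m ≥ n} 2^{n-m} λ_m < ∞. Then for every A > B, P(Y > A) ≤ (B/A)^A · e^A. -/
/-!
For `s ≥ 1` the probability generating function of a Poisson variable of parameter `λ` gives
`E[s ^ (w X)] = exp (λ (s ^ w - 1)) ≤ exp ((s - 1) w λ)` whenever `0 ≤ w ≤ 1`, by Bernoulli's
inequality. By independence, `E[s ^ Y] ≤ exp ((s - 1) B)` for every partial sum `Y` of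
`∑ 2^(n-m) X_m`, so Markov's inequality applied to `s ^ Y` bounds `P(Y > A)` by
`exp ((s - 1) B) / s ^ A`; the events increase to `{∑ > A}`. The choice `s = A / B` gives
`e^(A - B) (B/A)^A`, and for `B = 0` letting `s → ∞` gives `0`.
-/

open MeasureTheory ProbabilityTheory Filter
open scoped NNReal ENNReal

namespace ProbabilityTheory

lemma lintegral_pow_poissonMeasure (r : ℝ≥0) {t : ℝ} (ht : 0 ≤ t) :
    ∫⁻ k, ENNReal.ofReal t ^ k ∂poissonMeasure r = ENNReal.ofReal (Real.exp (r * (t - 1))) := by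
  have hsum : HasSum (fun k : ℕ => t ^ k * (Real.exp (-r) * r ^ k / k.factorial))
      (Real.exp (r * (t - 1))) := by
    have h := (NormedSpace.expSeries_div_hasSum_exp ((r : ℝ) * t)).mul_left (Real.exp (-r))
    rw [← Real.exp_eq_exp_ℝ, ← Real.exp_add] at h
    rw [show (r : ℝ) * (t - 1) = -r + r * t by ring]
    convert! h using 1
    ext k
    ring
  have hterm (k : ℕ) : ENNReal.ofReal t ^ k * poissonMeasure r {k}
      = ENNReal.ofReal (t ^ k * (Real.exp (-r) * r ^ k / k.factorial)) := by
    rw [poissonMeasure_singleton, ENNReal.ofReal_mul (by positivity), ENNReal.ofReal_pow ht]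
  rw [lintegral_countable', tsum_congr hterm,
    ← ENNReal.ofReal_tsum_of_nonneg (fun k => by positivity) hsum.summable, hsum.tsum_eq]

section WeightedPoissonSum

variable {ι Ω : Type*} [MeasurableSpace Ω] {P : Measure Ω} {X : ι → Ω → ℕ} {lam : ι → ℝ≥0}
  {w : ι → ℝ}

lemma lintegral_rpow_sum_mul_of_iIndepFun_poisson (hXmeas : ∀ m, Measurable (X m))
    (hindep : iIndepFun X P) (hdist : ∀ m, P.map (X m) = poissonMeasure (lam m))
    (I : Finset ι) {s : ℝ} (hs : 0 < s) :
    ∫⁻ ω, ENNReal.ofReal (s ^ ∑ m ∈ I, w m * X m ω) ∂P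
      = ∏ m ∈ I, ENNReal.ofReal (Real.exp (lam m * (s ^ w m - 1))) := by
  have hprod (ω : Ω) : ENNReal.ofReal (s ^ ∑ m ∈ I, w m * X m ω)
      = ∏ m ∈ I, ENNReal.ofReal (s ^ w m) ^ X m ω := by
    simp_rw [Real.rpow_sum_of_pos hs, Real.rpow_mul_natCast hs.le,
      ENNReal.ofReal_prod_of_nonneg fun m _ => pow_nonneg (Real.rpow_nonneg hs.le _) _,
      ENNReal.ofReal_pow (Real.rpow_nonneg hs.le _)]
  have hfactor (m : ι) : ∫⁻ ω, ENNReal.ofReal (s ^ w m) ^ X m ω ∂P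
      = ENNReal.ofReal (Real.exp (lam m * (s ^ w m - 1))) := by
    rw [← lintegral_map (f := fun k => ENNReal.ofReal (s ^ w m) ^ k) .of_discrete (hXmeas m),
      hdist m, lintegral_pow_poissonMeasure _ (Real.rpow_nonneg hs.le _)]
  simp_rw [hprod, ← hfactor]
  exact lintegral_prod_eq_prod_lintegral_of_indepFun I _
    (hindep.comp _ fun m => .of_discrete) fun m => Measurable.of_discrete.comp (hXmeas m)

lemma measure_lt_sum_mul_le_of_iIndepFun_poisson (hXmeas : ∀ m, Measurable (X m))
    (hindep : iIndepFun X P) (hdist : ∀ m, P.map (X m) = poissonMeasure (lam m))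
    (hw0 : ∀ m, 0 ≤ w m) (hw1 : ∀ m, w m ≤ 1) (I : Finset ι) (A : ℝ) {s : ℝ} (hs : 1 ≤ s) :
    P {ω | A < ∑ m ∈ I, w m * X m ω}
      ≤ ENNReal.ofReal (Real.exp ((s - 1) * ∑ m ∈ I, w m * lam m) / s ^ A) := by
  have hs0 : 0 < s := one_pos.trans_le hs
  have hsA : 0 < s ^ A := Real.rpow_pos_of_pos hs0 A
  have hsub : {ω | A < ∑ m ∈ I, w m * X m ω}
      ⊆ {ω | ENNReal.ofReal (s ^ A) ≤ ENNReal.ofReal (s ^ ∑ m ∈ I, w m * X m ω)} :=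
    fun ω hω => ENNReal.ofReal_le_ofReal (Real.rpow_le_rpow_of_exponent_le hs hω.le)
  have hexponent (m : ι) : (lam m : ℝ) * (s ^ w m - 1) ≤ (s - 1) * (w m * lam m) := by
    have h := rpow_one_add_le_one_add_mul_self (by linarith : -1 ≤ s - 1) (hw0 m) (hw1 m)
    rw [add_sub_cancel] at h
    nlinarith [(lam m).coe_nonneg]
  have hmgf : ∫⁻ ω, ENNReal.ofReal (s ^ ∑ m ∈ I, w m * X m ω) ∂P
      ≤ ENNReal.ofReal (Real.exp ((s - 1) * ∑ m ∈ I, w m * lam m)) := by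
    rw [lintegral_rpow_sum_mul_of_iIndepFun_poisson hXmeas hindep hdist I hs0,
      ← ENNReal.ofReal_prod_of_nonneg fun m _ => (Real.exp_pos _).le, ← Real.exp_sum,
      Finset.mul_sum]
    exact ENNReal.ofReal_le_ofReal (Real.exp_le_exp.mpr (Finset.sum_le_sum fun m _ => hexponent m))
  calc P {ω | A < ∑ m ∈ I, w m * X m ω}
      ≤ (∫⁻ ω, ENNReal.ofReal (s ^ ∑ m ∈ I, w m * X m ω) ∂P) / ENNReal.ofReal (s ^ A) :=
        (measure_mono hsub).trans (meas_ge_le_lintegral_div (by fun_prop)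
          (ENNReal.ofReal_pos.mpr hsA).ne' ENNReal.ofReal_ne_top)
    _ ≤ ENNReal.ofReal (Real.exp ((s - 1) * ∑ m ∈ I, w m * lam m) / s ^ A) := by
        rw [ENNReal.ofReal_div_of_pos hsA]
        exact ENNReal.div_le_div_right hmgf _

end WeightedPoissonSum

section WeightedPoissonSeries

variable {Ω : Type*} [MeasurableSpace Ω] {P : Measure Ω} {X : ℕ → Ω → ℕ} {lam : ℕ → ℝ≥0}
  {w : ℕ → ℝ}

lemma measure_lt_tsum_mul_le_of_iIndepFun_poisson (hXmeas : ∀ m, Measurable (X m))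
    (hindep : iIndepFun X P) (hdist : ∀ m, P.map (X m) = poissonMeasure (lam m))
    (hw0 : ∀ m, 0 ≤ w m) (hw1 : ∀ m, w m ≤ 1) (hsum : Summable fun m => w m * lam m)
    (A : ℝ) {s : ℝ} (hs : 1 ≤ s) :
    P {ω | A < ∑' m, w m * X m ω}
      ≤ ENNReal.ofReal (Real.exp ((s - 1) * ∑' m, w m * lam m) / s ^ A) := by
  let E (N : ℕ) := {ω | A < ∑ m ∈ Finset.range N, w m * X m ω}
  have hterm_nonneg (ω : Ω) (m : ℕ) : 0 ≤ w m * X m ω := mul_nonneg (hw0 m) (Nat.cast_nonneg _)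
  have hE_mono : Monotone E := fun N M hNM ω (hω : A < _) =>
    hω.trans_le (Finset.sum_le_sum_of_subset_of_nonneg (Finset.range_subset_range.mpr hNM)
      fun m _ _ => hterm_nonneg ω m)
  have hsub : {ω | A < ∑' m, w m * X m ω} ⊆ ⋃ N, E N := fun ω hω => by
    by_contra! h
    simp only [Set.mem_iUnion, not_exists] at h
    exact (Real.tsum_le_of_sum_range_le (hterm_nonneg ω) fun N => not_lt.mp (h N)).not_gt hω
  refine (measure_mono hsub).trans ?_
  rw [hE_mono.measure_iUnion]
  refine iSup_le fun N => (measure_lt_sum_mul_le_of_iIndepFun_poisson hXmeas hindep hdist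
    hw0 hw1 _ A hs).trans (ENNReal.ofReal_le_ofReal ?_)
  gcongr
  exact hsum.sum_le_tsum _ fun m _ => mul_nonneg (hw0 m) (lam m).coe_nonneg

end WeightedPoissonSeries

end ProbabilityTheory

lemma le_div_rpow_mul_exp_of_forall_le_exp_div_rpow {p A B : ℝ} (hB : 0 ≤ B) (hA : B < A)
    (h : ∀ s, 1 ≤ s → p ≤ Real.exp ((s - 1) * B) / s ^ A) :
    p ≤ (B / A) ^ A * Real.exp A := by
  have hA0 : 0 < A := hB.trans_lt hA
  rcases hB.eq_or_lt with rfl | hB0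
  · rw [zero_div, Real.zero_rpow hA0.ne', zero_mul]
    refine ge_of_tendsto (tendsto_rpow_neg_atTop hA0)
      (eventually_ge_atTop 1 |>.mono fun s hs => ?_)
    simpa [Real.rpow_neg (zero_le_one.trans hs)] using h s hs
  · calc p ≤ Real.exp ((A / B - 1) * B) / (A / B) ^ A := h _ ((one_le_div hB0).mpr hA.le)
      _ ≤ Real.exp A / (A / B) ^ A := by
          gcongr
          rw [sub_mul, div_mul_cancel₀ _ hB0.ne']
          linarith
      _ = (B / A) ^ A * Real.exp A := by
          rw [div_eq_mul_inv, mul_comm, ← Real.inv_rpow (by positivity), inv_div]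

theorem poisson_weighted_sum_tail_bound_general
    {Ω : Type*} [MeasurableSpace Ω] (P : Measure Ω)
    (X : ℕ → Ω → ℕ) (hXmeas : ∀ m, Measurable (X m))
    (hindep : iIndepFun (m := fun _ : ℕ => (inferInstance : MeasurableSpace ℕ)) X P)
    (lam : ℕ → ℝ≥0)
    (hdist : ∀ m, Measure.map (X m) P = poissonMeasure (lam m))
    (n : ℕ) (B : ℝ)
    (hBsum : Summable (fun m : ℕ =>
      if n ≤ m then (2 : ℝ) ^ ((n : ℝ) - m) * (lam m : ℝ) else 0))
    (hB : B = ∑' m : ℕ, if n ≤ m then (2 : ℝ) ^ ((n : ℝ) - m) * (lam m : ℝ) else 0)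
    (A : ℝ) (hA : B < A) :
    (P {ω | A < ∑' m : ℕ,
        if n ≤ m then (2 : ℝ) ^ ((n : ℝ) - m) * (X m ω : ℝ) else 0}).toReal
      ≤ (B / A) ^ A * Real.exp A := by
  let w (m : ℕ) : ℝ := if n ≤ m then (2 : ℝ) ^ ((n : ℝ) - m) else 0
  have hw0 (m : ℕ) : 0 ≤ w m := by unfold w; split_ifs <;> positivity
  have hw1 (m : ℕ) : w m ≤ 1 := by
    unfold w
    split_ifs with hm
    · exact Real.rpow_le_one_of_one_le_of_nonpos one_le_two (by simpa using hm)
    · exact zero_le_one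
  simp only [← ite_zero_mul] at hBsum hB ⊢
  have hB0 : 0 ≤ B := hB ▸ tsum_nonneg fun m => mul_nonneg (hw0 m) (lam m).coe_nonneg
  refine le_div_rpow_mul_exp_of_forall_le_exp_div_rpow hB0 hA fun s hs =>
    ENNReal.toReal_le_of_le_ofReal (by positivity) ?_
  rw [hB]
  exact measure_lt_tsum_mul_le_of_iIndepFun_poisson hXmeas hindep hdist hw0 hw1 hBsum A hs

/-- Chernoff-type bound for a geometrically weighted sum of independent Poisson
variables: if `Y = ∑_{m ≥ n} 2^{n-m} X_m` with `X_m` independent Poisson of parameters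
`λ_m`, and `B = ∑_{m ≥ n} 2^{n-m} λ_m < ∞`, then for every `A > B`,
`P(Y > A) ≤ (B/A)^A e^A`. -/
theorem poisson_weighted_sum_tail_bound
    {Ω : Type*} [MeasurableSpace Ω] (P : Measure Ω) [IsProbabilityMeasure P]
    (X : ℕ → Ω → ℕ) (hXmeas : ∀ m, Measurable (X m))
    (hindep : iIndepFun (m := fun _ : ℕ => (inferInstance : MeasurableSpace ℕ)) X P)
    (lam : ℕ → ℝ≥0)
    (hdist : ∀ m, Measure.map (X m) P = poissonMeasure (lam m))
    (n : ℕ) (B : ℝ)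
    (hBsum : Summable (fun m : ℕ =>
      if n ≤ m then (2 : ℝ) ^ ((n : ℝ) - m) * (lam m : ℝ) else 0))
    (hB : B = ∑' m : ℕ, if n ≤ m then (2 : ℝ) ^ ((n : ℝ) - m) * (lam m : ℝ) else 0)
    (A : ℝ) (hA : B < A) :
    (P {ω | A < ∑' m : ℕ,
        if n ≤ m then (2 : ℝ) ^ ((n : ℝ) - m) * (X m ω : ℝ) else 0}).toReal
      ≤ (B / A) ^ A * Real.exp A :=
  poisson_weighted_sum_tail_bound_general P X hXmeas hindep lam hdist n B hBsum hB A hA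
end

section
/- Let (X_n)_{n ≥ 1} be independent Poisson random variables with parameters μ_n ≥ 0, and suppose ∑_n 2^{-n} μ_n = ∞. Then almost surely ∑_n 2^{-n} X_n = ∞. -/
/-!
Call `n` bad if `μ n ≥ n` and `X n ≤ μ n / 2`. The Chernoff bound at `t = 1`,
`P(X n ≤ μ n / 2) ≤ exp (-(1/2 - e⁻¹) μ n)`, is geometric in `n` once `μ n ≥ n`, so by
Borel–Cantelli almost surely only finitely many `n` are bad. At every other index
`2⁻ⁿ μ n ≤ 2⁻ⁿ n + 2 · 2⁻ⁿ X n`, so summability of `∑ 2⁻ⁿ X n` would force that of `∑ 2⁻ⁿ μ n`.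
-/

open MeasureTheory ProbabilityTheory Real Filter
open scoped NNReal

lemma hasSum_poissonMeasure_mul_exp_mul (r : ℝ≥0) (t : ℝ) :
    HasSum (fun n : ℕ ↦ exp (-r) * r ^ n / n.factorial * exp (t * n))
      (exp (r * (exp t - 1))) := by
  have h := (NormedSpace.expSeries_div_hasSum_exp (r * exp t : ℝ)).mul_left (exp (-r))
  rw [← exp_eq_exp_ℝ, ← exp_add, neg_add_eq_sub, ← mul_sub_one] at h
  convert! h using 1
  funext n
  rw [mul_pow, ← exp_nat_mul, mul_comm (n : ℝ) t]
  ring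

lemma integrable_exp_mul_poissonMeasure (r : ℝ≥0) (t : ℝ) :
    Integrable (fun n : ℕ ↦ exp (t * n)) (poissonMeasure r) := by
  rw [integrable_poissonMeasure_iff]
  simpa only [norm_of_nonneg (exp_nonneg _)] using
    (hasSum_poissonMeasure_mul_exp_mul r t).summable

lemma mgf_poissonMeasure (r : ℝ≥0) (t : ℝ) :
    mgf (fun n : ℕ ↦ (n : ℝ)) (poissonMeasure r) t = exp (r * (exp t - 1)) :=
  (hasSum_integral_poissonMeasure (integrable_exp_mul_poissonMeasure r t)).unique
    (hasSum_poissonMeasure_mul_exp_mul r t)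

lemma poissonMeasure_real_le_le_exp (r : ℝ≥0) (a : ℝ) {t : ℝ} (ht : 0 ≤ t) :
    (poissonMeasure r).real {n | (n : ℝ) ≤ a} ≤ exp (t * a + r * (exp (-t) - 1)) := by
  have := measure_le_le_exp_mul_mgf a (neg_nonpos.2 ht) (integrable_exp_mul_poissonMeasure r (-t))
  rwa [mgf_poissonMeasure, ← exp_add, neg_neg] at this

lemma poissonMeasure_le_half_le_exp (r : ℝ≥0) :
    poissonMeasure r {n | (n : ℝ) ≤ r / 2} ≤ ENNReal.ofReal (exp (-((1 / 2 - exp (-1)) * r))) := by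
  rw [← ofReal_measureReal]
  refine ENNReal.ofReal_le_ofReal ((poissonMeasure_real_le_le_exp r _ zero_le_one).trans_eq ?_)
  ring_nf

lemma measure_le_half_le_of_map_eq_poissonMeasure {Ω : Type*} [MeasurableSpace Ω]
    {P : Measure Ω} {Y : Ω → ℕ} (hY : Measurable Y) {r : ℝ≥0}
    (hPY : P.map Y = poissonMeasure r) :
    P {ω | (Y ω : ℝ) ≤ r / 2} ≤ ENNReal.ofReal (exp (-((1 / 2 - exp (-1)) * r))) := by
  have h := poissonMeasure_le_half_le_exp r
  rwa [← hPY, Measure.map_apply hY .of_discrete] at h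

lemma one_half_sub_exp_neg_one_pos : 0 < 1 / 2 - exp (-1) := by
  have := exp_one_gt_d9
  rw [exp_neg, sub_pos, inv_lt_comm₀ (exp_pos 1) (by norm_num)]
  linarith

lemma summable_mul_of_eventually_half_lt {w a b : ℕ → ℝ} (hw : 0 ≤ w) (ha : 0 ≤ a) (hb : 0 ≤ b)
    (hwn : Summable fun n ↦ w n * n) (hwb : Summable fun n ↦ w n * b n)
    (hab : ∀ᶠ n : ℕ in atTop, (n : ℝ) ≤ a n → a n / 2 < b n) :
    Summable fun n ↦ w n * a n := by
  refine .of_norm_bounded_eventually_nat (hwn.add (hwb.mul_left 2)) ?_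
  filter_upwards [hab] with n hn
  have hwa_nonneg : 0 ≤ w n * a n := mul_nonneg (hw n) (ha n)
  have hwb_nonneg : 0 ≤ w n * b n := mul_nonneg (hw n) (hb n)
  rw [Real.norm_of_nonneg hwa_nonneg]
  rcases le_or_gt (n : ℝ) (a n) with hna | hna
  · nlinarith [hn hna, hw n]
  · nlinarith [mul_le_mul_of_nonneg_left hna.le (hw n)]

theorem poisson_weighted_sum_infinite_as_general
    {Ω : Type*} [MeasurableSpace Ω] (P : Measure Ω)
    (X : ℕ → Ω → ℕ) (hXmeas : ∀ n, Measurable (X n))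
    (μ : ℕ → ℝ≥0)
    (hdist : ∀ n, Measure.map (X n) P = poissonMeasure (μ n))
    (hsum : ¬ Summable (fun n : ℕ => (2 : ℝ) ^ (-(n : ℝ)) * (μ n : ℝ))) :
    ∀ᵐ ω ∂P, ¬ Summable (fun n : ℕ => (2 : ℝ) ^ (-(n : ℝ)) * (X n ω : ℝ)) := by
  set c := 1 / 2 - exp (-1)
  have hc : 0 < c := one_half_sub_exp_neg_one_pos
  set B : ℕ → Set Ω := fun n ↦ {ω | (n : ℝ) ≤ μ n ∧ (X n ω : ℝ) ≤ μ n / 2}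
  have hB : ∀ n, P (B n) ≤ ENNReal.ofReal (exp (-c)) ^ n := fun n ↦ by
    by_cases hn : (n : ℝ) ≤ μ n
    · calc P (B n) ≤ P {ω | (X n ω : ℝ) ≤ μ n / 2} := measure_mono fun ω hω ↦ hω.2
        _ ≤ ENNReal.ofReal (exp (-(c * μ n))) :=
          measure_le_half_le_of_map_eq_poissonMeasure (hXmeas n) (hdist n)
        _ ≤ ENNReal.ofReal (exp (n * -c)) := by gcongr; nlinarith
        _ = ENNReal.ofReal (exp (-c)) ^ n := by rw [exp_nat_mul, ENNReal.ofReal_pow (exp_nonneg _)]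
    · simp [B, hn]
  have hBsum : ∑' n, P (B n) ≠ ⊤ :=
    ne_top_of_le_ne_top (tsum_geometric_lt_top.2
      (ENNReal.ofReal_lt_one.2 (exp_lt_one_iff.2 (neg_neg_of_pos hc)))).ne (ENNReal.tsum_le_tsum hB)
  have hwn : Summable fun n : ℕ ↦ (2 : ℝ) ^ (-(n : ℝ)) * n := by
    simpa [rpow_neg, rpow_natCast, inv_pow, mul_comm] using
      summable_pow_mul_geometric_of_norm_lt_one 1 (r := (2⁻¹ : ℝ)) (by norm_num)
  filter_upwards [ae_eventually_notMem hBsum] with ω hω hXω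
  refine hsum (summable_mul_of_eventually_half_lt (fun n ↦ by positivity) (fun n ↦ by positivity)
    (fun n ↦ by positivity) hwn hXω ?_)
  filter_upwards [hω] with n hgood hμn
  simpa [B, hμn] using hgood

/-- If `X_n` are independent Poisson random variables of parameters `μ_n` and
`∑_n 2^{-n} μ_n = ∞`, then almost surely `∑_n 2^{-n} X_n = ∞`. -/
theorem poisson_weighted_sum_infinite_as
    {Ω : Type*} [MeasurableSpace Ω] (P : Measure Ω) [IsProbabilityMeasure P]
    (X : ℕ → Ω → ℕ) (hXmeas : ∀ n, Measurable (X n))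
    (hindep : iIndepFun X P)
    (μ : ℕ → ℝ≥0)
    (hdist : ∀ n, Measure.map (X n) P = poissonMeasure (μ n))
    (hsum : ¬ Summable (fun n : ℕ => (2 : ℝ) ^ (-(n : ℝ)) * (μ n : ℝ))) :
    ∀ᵐ ω ∂P, ¬ Summable (fun n : ℕ => (2 : ℝ) ^ (-(n : ℝ)) * (X n ω : ℝ)) :=
  poisson_weighted_sum_infinite_as_general P X hXmeas μ hdist hsum
end

section
/- Fix 0 < α < 1 and γ with 1 < γ < 1/(1-α), and let β satisfy 1/γ + 1/β = 1. Then α·β > 1 and α - 1/β = 1/γ - (1-α) > 0. Consequently, for any nonnegative reals (μ_{n,k}) with ∑_{n,k} μ_{n,k}^γ < ∞, the quantity B_{n,k} = ∑_{m ≥ n} 2^{-(m-n)α} ∑_{j : ⌊j/2^{m-n}⌋ = k} μ_{m,j} satisfies B_{n,k} ≤ ∑_{m ≥ n} 2^{-(m-n)(α - 1/β)} (∑_{j : ⌊j/2^{m-n}⌋ = k} μ_{m,j}^γ)^{1/γ}, and in particular is uniformly bounded over n, k. -/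
/-- Hölder estimate for the `α`-Carleson sums: for `0 < α < 1` and
`1 < γ < 1/(1-α)` with conjugate exponent `β`, one has `αβ > 1` and
`α - 1/β = 1/γ - (1-α) > 0`; consequently if `∑_{n,k} μ_{n,k}^γ < ∞` then
`B_{n,k} = ∑_{m ≥ n} 2^{-(m-n)α} ∑_{j : ⌊j/2^{m-n}⌋ = k} μ_{m,j}` satisfies the
Hölder bound and is uniformly bounded in `n, k`. -/
theorem alpha_Carleson_Bnk_bound (α γ β : ℝ) (hα0 : 0 < α) (hα1 : α < 1)
    (hγ1 : 1 < γ) (hγ2 : γ < 1 / (1 - α)) (hβ : 1 / γ + 1 / β = 1) :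
    1 < α * β ∧ α - 1 / β = 1 / γ - (1 - α) ∧ 0 < α - 1 / β ∧
    ∀ (μ : ℕ → ℕ → ℝ), (∀ n k, 0 ≤ μ n k) → (∀ n k, 2 ^ n ≤ k → μ n k = 0) →
      Summable (fun p : ℕ × ℕ => μ p.1 p.2 ^ γ) →
      ((∀ n k : ℕ, k < 2 ^ n →
          (∑' d : ℕ, (2 : ℝ) ^ (-(d : ℝ) * α) *
              ∑ j ∈ Finset.Ico (k * 2 ^ d) ((k + 1) * 2 ^ d), μ (n + d) j)
            ≤ ∑' d : ℕ, (2 : ℝ) ^ (-(d : ℝ) * (α - 1 / β)) *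
                (∑ j ∈ Finset.Ico (k * 2 ^ d) ((k + 1) * 2 ^ d), μ (n + d) j ^ γ) ^ (1 / γ)) ∧
        ∃ C : ℝ, ∀ n k : ℕ, k < 2 ^ n →
          (∑' d : ℕ, (2 : ℝ) ^ (-(d : ℝ) * α) *
              ∑ j ∈ Finset.Ico (k * 2 ^ d) ((k + 1) * 2 ^ d), μ (n + d) j) ≤ C) := by
  have h2 : (1:ℝ) < 2 := one_lt_two
  have hγ0 : (0:ℝ) < γ := lt_trans one_pos hγ1
  have hγi0 : 0 < 1 / γ := by positivity
  have hγi1 : 1 / γ < 1 := by rw [div_lt_one hγ0]; exact hγ1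
  have hβinv : 1 / β = 1 - 1 / γ := by linarith
  have hβi0 : 0 < 1 / β := by rw [hβinv]; linarith
  have hβ0 : 0 < β := by
    rcases lt_trichotomy β 0 with h | h | h
    · exact absurd (div_neg_of_pos_of_neg one_pos h) (not_lt.2 hβi0.le)
    · rw [h] at hβi0; simp at hβi0
    · exact h
  have h1α : 0 < 1 - α := by linarith
  have hkey : 1 - α < 1 / γ := by
    rw [lt_div_iff₀ hγ0]
    have h' : γ * (1 - α) < 1 := (lt_div_iff₀ h1α).mp hγ2
    nlinarith
  have heq : α - 1 / β = 1 / γ - (1 - α) := by rw [hβinv]; ring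
  have hε : 0 < α - 1 / β := by rw [heq]; linarith
  have hαβ : 1 < α * β := by
    have h1 : 1 / β < α := by linarith
    calc (1:ℝ) = (1 / β) * β := by field_simp
      _ < α * β := mul_lt_mul_of_pos_right h1 hβ0
  refine ⟨hαβ, heq, hε, ?_⟩
  intro μ hμ0 _ hsum
  set ε := α - 1 / β with hεdef
  set S := ∑' p : ℕ × ℕ, μ p.1 p.2 ^ γ with hS
  -- partial sums of μ^γ are bounded by S
  have hpart : ∀ n d k : ℕ,
      (∑ j ∈ Finset.Ico (k * 2 ^ d) ((k + 1) * 2 ^ d), μ (n + d) j ^ γ) ≤ S := by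
    intro n d k
    have hinj : Function.Injective (fun j => ((n + d, j) : ℕ × ℕ)) := by
      intro a b h; simpa using h
    calc (∑ j ∈ Finset.Ico (k * 2 ^ d) ((k + 1) * 2 ^ d), μ (n + d) j ^ γ)
        = ∑ p ∈ (Finset.Ico (k * 2 ^ d) ((k + 1) * 2 ^ d)).map ⟨fun j => (n + d, j), hinj⟩,
            μ p.1 p.2 ^ γ := by rw [Finset.sum_map]; rfl
      _ ≤ S := Summable.sum_le_tsum _ (fun p _ => Real.rpow_nonneg (hμ0 _ _) _) hsum
  have hsumnn : ∀ n d k : ℕ,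
      (0:ℝ) ≤ ∑ j ∈ Finset.Ico (k * 2 ^ d) ((k + 1) * 2 ^ d), μ (n + d) j ^ γ :=
    fun n d k => Finset.sum_nonneg fun j _ => Real.rpow_nonneg (hμ0 _ _) _
  -- Hölder estimate term by term
  have hHolder : ∀ n d k : ℕ,
      (2 : ℝ) ^ (-(d : ℝ) * α) * ∑ j ∈ Finset.Ico (k * 2 ^ d) ((k + 1) * 2 ^ d), μ (n + d) j
      ≤ (2 : ℝ) ^ (-(d : ℝ) * ε) *
          (∑ j ∈ Finset.Ico (k * 2 ^ d) ((k + 1) * 2 ^ d), μ (n + d) j ^ γ) ^ (1 / γ) := by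
    intro n d k
    set s := Finset.Ico (k * 2 ^ d) ((k + 1) * 2 ^ d) with hs
    have hH := Real.inner_le_weight_mul_Lp_of_nonneg s hγ1.le (fun _ => (1:ℝ))
      (fun j => μ (n + d) j) (fun _ => zero_le_one) (fun j => hμ0 _ _)
    simp only [one_mul] at hH
    have hcard : (∑ _j ∈ s, (1:ℝ)) = (2:ℝ) ^ d := by
      rw [Finset.sum_const, nsmul_eq_mul, mul_one, hs, Nat.card_Ico]
      have h1 : (k + 1) * 2 ^ d - k * 2 ^ d = 2 ^ d := by
        rw [add_mul, one_mul, Nat.add_sub_cancel_left]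
      rw [h1]; push_cast; ring
    rw [hcard] at hH
    calc (2 : ℝ) ^ (-(d : ℝ) * α) * ∑ j ∈ s, μ (n + d) j
        ≤ (2 : ℝ) ^ (-(d : ℝ) * α) *
            (((2:ℝ) ^ d) ^ (1 - γ⁻¹) * (∑ j ∈ s, μ (n + d) j ^ γ) ^ γ⁻¹) :=
          mul_le_mul_of_nonneg_left hH (Real.rpow_nonneg (by norm_num) _)
      _ = (2 : ℝ) ^ (-(d : ℝ) * ε) * (∑ j ∈ s, μ (n + d) j ^ γ) ^ (1 / γ) := by
          rw [one_div, ← Real.rpow_natCast (2:ℝ) d, ← Real.rpow_mul (by norm_num : (0:ℝ) ≤ 2),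
            ← mul_assoc, ← Real.rpow_add two_pos]
          congr 2
          rw [hεdef, hβinv]; ring
  have hRnn : ∀ n d k : ℕ,
      (0:ℝ) ≤ (2 : ℝ) ^ (-(d : ℝ) * ε) *
        (∑ j ∈ Finset.Ico (k * 2 ^ d) ((k + 1) * 2 ^ d), μ (n + d) j ^ γ) ^ (1 / γ) :=
    fun n d k => mul_nonneg (Real.rpow_nonneg (by norm_num) _)
      (Real.rpow_nonneg (hsumnn n d k) _)
  have hRbound : ∀ n d k : ℕ,
      (2 : ℝ) ^ (-(d : ℝ) * ε) *
        (∑ j ∈ Finset.Ico (k * 2 ^ d) ((k + 1) * 2 ^ d), μ (n + d) j ^ γ) ^ (1 / γ)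
      ≤ (2 : ℝ) ^ (-(d : ℝ) * ε) * S ^ (1 / γ) :=
    fun n d k => mul_le_mul_of_nonneg_left
      (Real.rpow_le_rpow (hsumnn n d k) (hpart n d k) hγi0.le)
      (Real.rpow_nonneg (by norm_num) _)
  have hgeom : Summable (fun d : ℕ => (2 : ℝ) ^ (-(d : ℝ) * ε) * S ^ (1 / γ)) := by
    have hrw : ∀ d : ℕ, (2 : ℝ) ^ (-(d : ℝ) * ε) = ((2:ℝ) ^ (-ε)) ^ d := by
      intro d
      rw [← Real.rpow_natCast ((2:ℝ) ^ (-ε)) d, ← Real.rpow_mul (by norm_num : (0:ℝ) ≤ 2)]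
      congr 1; ring
    simp_rw [hrw]
    exact (summable_geometric_of_lt_one (by positivity)
      (Real.rpow_lt_one_of_one_lt_of_neg h2 (neg_neg_of_pos hε))).mul_right _
  have hRsum : ∀ n k : ℕ, Summable (fun d : ℕ => (2 : ℝ) ^ (-(d : ℝ) * ε) *
      (∑ j ∈ Finset.Ico (k * 2 ^ d) ((k + 1) * 2 ^ d), μ (n + d) j ^ γ) ^ (1 / γ)) :=
    fun n k => Summable.of_nonneg_of_le (fun d => hRnn n d k) (fun d => hRbound n d k) hgeom
  have hLsum : ∀ n k : ℕ, Summable (fun d : ℕ => (2 : ℝ) ^ (-(d : ℝ) * α) *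
      ∑ j ∈ Finset.Ico (k * 2 ^ d) ((k + 1) * 2 ^ d), μ (n + d) j) :=
    fun n k => Summable.of_nonneg_of_le
      (fun d => mul_nonneg (Real.rpow_nonneg (by norm_num) _)
        (Finset.sum_nonneg fun j _ => hμ0 _ _))
      (fun d => hHolder n d k) (hRsum n k)
  refine ⟨fun n k _ => Summable.tsum_le_tsum (fun d => hHolder n d k) (hLsum n k) (hRsum n k),
    ⟨∑' d : ℕ, (2 : ℝ) ^ (-(d : ℝ) * ε) * S ^ (1 / γ), fun n k _ => ?_⟩⟩
  calc (∑' d : ℕ, (2 : ℝ) ^ (-(d : ℝ) * α) *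
          ∑ j ∈ Finset.Ico (k * 2 ^ d) ((k + 1) * 2 ^ d), μ (n + d) j)
      ≤ ∑' d : ℕ, (2 : ℝ) ^ (-(d : ℝ) * ε) *
          (∑ j ∈ Finset.Ico (k * 2 ^ d) ((k + 1) * 2 ^ d), μ (n + d) j ^ γ) ^ (1 / γ) :=
        Summable.tsum_le_tsum (fun d => hHolder n d k) (hLsum n k) (hRsum n k)
    _ ≤ ∑' d : ℕ, (2 : ℝ) ^ (-(d : ℝ) * ε) * S ^ (1 / γ) :=
        Summable.tsum_le_tsum (fun d => hRbound n d k) (hRsum n k) hgeom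
end
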